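/- Let m, n ≥ 0 be integers with p = 2m+n ≥ 2, and let G be a finite simple graph such that every (m,n)-colored mixed graph with underlying graph G admits a homomorphism to some (m,n)-colored mixed graph on at most k vertices. Then the arboricity of G satisfies arb(G) ≤ ⌈log_p k + k/2⌉. -/

import Mathlib

/-!
Fix a vertex set `s` with `v` vertices and `E` edges in `G[s]`, and let `p = 2m+n`. Each of the
`p ^ E` ways of putting links on the edges of `G[s]` gives a mixed graph mapping to one on `Fin k`
that may be taken complete, and the links are recovered from the vertex map together with one link
per pair of `Fin k`. Hence `p ^ E ≤ k ^ v * p ^ (k choose 2)`, i.e. `E ≤ v log_p k + k(k-1)/2`,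
which together with `E ≤ v(v-1)/2` gives `E ≤ r(v-1)` for `r = ⌈log_p k + k/2⌉`.

Nash-Williams' theorem then splits `G` into `r` forests. Take `r` edge-disjoint forests covering
as many edges as possible and an uncovered edge `xy`. Starting from `(x, y)`, collect the edges of
the `i`-th forest on its path between an already collected pair. If some collected pair is
disconnected in some forest `j`, a shortest such chain lets one move edges between forests and
then add `xy`. Otherwise every forest is a spanning tree of the set `S` of collected vertices, so
`G[S]` has at least `r(|S|-1) + 1` edges.
-/

/-- The possible kinds of links from a vertex `u` to a vertex `v` in an
`(m,n)`-colored mixed graph: an arc `u → v` of one of `m` colors, an arc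
`v → u` of one of `m` colors, or an (unoriented) edge of one of `n` colors. -/
inductive Link (m n : ℕ) : Type where
  | arcOut : Fin m → Link m n
  | arcIn : Fin m → Link m n
  | edge : Fin n → Link m n

/-- The link as seen from the other endpoint. -/
def Link.flip {m n : ℕ} : Link m n → Link m n
  | .arcOut c => .arcIn c
  | .arcIn c => .arcOut c
  | .edge c => .edge c

/-- An `(m,n)`-colored mixed graph on vertex type `V`: between any two distinct
vertices there is at most one link (a colored arc in either direction or a
colored edge), and there are no loops. -/
structure CMGraph (m n : ℕ) (V : Type) where
  link : V → V → Option (Link m n)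
  symm : ∀ u v, link v u = (link u v).map Link.flip
  loopless : ∀ v, link v v = none

/-- The underlying simple graph of an `(m,n)`-colored mixed graph. -/
def CMGraph.underlying {m n : ℕ} {V : Type} (G : CMGraph m n V) : SimpleGraph V where
  Adj u v := (G.link u v).isSome
  symm := by
    refine ⟨?_⟩
    intro u v h
    beta_reduce at h ⊢
    rw [G.symm u v]
    rcases hx : G.link u v with _ | l
    · rw [hx] at h; simp at h
    · simp
  loopless := by
    refine ⟨?_⟩
    intro v h
    beta_reduce at h ⊢
    rw [G.loopless v] at h
    simp at h

/-- A homomorphism of `(m,n)`-colored mixed graphs: arcs map to arcs of the same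
color and direction, edges map to edges of the same color. -/
def IsCMHom {m n : ℕ} {V W : Type} (G : CMGraph m n V) (H : CMGraph m n W)
    (f : V → W) : Prop :=
  ∀ u v l, G.link u v = some l → H.link (f u) (f v) = some l

/-- `G` admits a homomorphism to some `(m,n)`-colored mixed graph on at most `k`
vertices, i.e. `χ_{(m,n)}(G) ≤ k`. -/
def CMChromAtMost {m n : ℕ} {V : Type} (G : CMGraph m n V) (k : ℕ) : Prop :=
  ∃ (W : Type) (inst : Fintype W) (H : CMGraph m n W) (f : V → W),
    @Fintype.card W inst ≤ k ∧ IsCMHom G H f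

/-- Every `(m,n)`-colored mixed graph admitting a homomorphism from `G` has at
least `k` vertices, i.e. `χ_{(m,n)}(G) ≥ k`. -/
def CMChromAtLeast {m n : ℕ} {V : Type} (G : CMGraph m n V) (k : ℕ) : Prop :=
  ∀ (W : Type) (inst : Fintype W) (H : CMGraph m n W) (f : V → W),
    IsCMHom G H f → k ≤ @Fintype.card W inst

/-- The acyclic chromatic number of `G` is at most `k`: there is a proper
`k`-coloring in which the union of any two color classes induces a forest. -/
def AcycChromAtMost {V : Type} (G : SimpleGraph V) (k : ℕ) : Prop :=
  ∃ c : V → Fin k, (∀ u v, G.Adj u v → c u ≠ c v) ∧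
    ∀ i j : Fin k, (G.induce {v | c v = i ∨ c v = j}).IsAcyclic

/-- The edge set of `G` can be decomposed into `r` forests. -/
def ArbAtMost {V : Type} (G : SimpleGraph V) (r : ℕ) : Prop :=
  ∃ F : Fin r → SimpleGraph V,
    (∀ i, F i ≤ G) ∧
    (∀ i, (F i).IsAcyclic) ∧
    (∀ u v, G.Adj u v → ∃ i, (F i).Adj u v) ∧
    (∀ i j, i ≠ j → ∀ u v, ¬ ((F i).Adj u v ∧ (F j).Adj u v))

/-- Every vertex of `G` has degree at most `d`. -/
def MaxDegAtMost {V : Type} (G : SimpleGraph V) (d : ℕ) : Prop :=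
  ∀ v, (G.neighborSet v).ncard ≤ d

/-- `G` is `d`-degenerate: every nonempty (induced) subgraph has a vertex of
degree at most `d` in it. -/
def DegenAtMost {V : Type} (G : SimpleGraph V) (d : ℕ) : Prop :=
  ∀ s : Set V, s.Nonempty → ∃ v ∈ s, (G.neighborSet v ∩ s).ncard ≤ d

open Finset

namespace SimpleGraph

section

variable {V α : Type*} {G F H : SimpleGraph V} {a b u v w x y : V}

lemma Reachable.of_sup_edge (h : (H ⊔ edge a b).Reachable u v) :
    H.Reachable u v ∨ (H.Reachable u a ∧ H.Reachable b v) ∨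
      (H.Reachable u b ∧ H.Reachable a v) := by
  obtain ⟨p⟩ := h
  induction p with
  | nil => exact .inl .rfl
  | @cons u w v huw _ ih =>
    rcases huw with huw | huw
    · have := huw.reachable
      rcases ih with h | ⟨h, h'⟩ | ⟨h, h'⟩
      · exact .inl (this.trans h)
      · exact .inr (.inl ⟨this.trans h, h'⟩)
      · exact .inr (.inr ⟨this.trans h, h'⟩)
    · obtain ⟨⟨rfl, rfl⟩ | ⟨rfl, rfl⟩, -⟩ := (edge_adj ..).1 huw
      · rcases ih with h | ⟨-, h⟩ | ⟨-, h⟩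
        · exact .inr (.inl ⟨.rfl, h⟩)
        · exact .inr (.inl ⟨.rfl, h⟩)
        · exact .inl h
      · rcases ih with h | ⟨-, h⟩ | ⟨-, h⟩
        · exact .inr (.inr ⟨.rfl, h⟩)
        · exact .inl h
        · exact .inr (.inr ⟨.rfl, h⟩)

lemma not_reachable_sup_edge_of_le (hHF : H ≤ F) (hab : ¬F.Reachable a b) (huv : F.Reachable u v)
    (h : ¬H.Reachable u v) : ¬(H ⊔ edge a b).Reachable u v := by
  intro h'
  rcases h'.of_sup_edge with h' | ⟨hua, hbv⟩ | ⟨hub, hav⟩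
  · exact h h'
  · exact hab ((hua.mono hHF).symm.trans (huv.trans (hbv.mono hHF).symm))
  · exact hab ((hav.mono hHF).trans (huv.symm.trans (hub.mono hHF)))

lemma IsAcyclic.not_reachable_deleteEdges_of_mem_edges (hF : F.IsAcyclic) {p : F.Walk u v}
    (hp : p.IsPath) {e : Sym2 V} (he : e ∈ p.edges) : ¬(F.deleteEdges {e}).Reachable u v := by
  classical
  rintro ⟨q⟩
  have hq : (q.bypass.mapLe (deleteEdges_le _)).IsPath := q.bypass_isPath.mapLe _
  have hpq : p = q.bypass.mapLe (deleteEdges_le _) :=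
    congrArg Subtype.val ((hF.subsingleton_path u v).elim ⟨p, hp⟩ ⟨_, hq⟩)
  rw [hpq, Walk.edges_mapLe_eq_edges] at he
  simpa using q.bypass.edges_subset_edgeSet he

lemma Walk.reachable_induce_of_support_subset {s : Set V} (p : G.Walk u v)
    (hp : ∀ w ∈ p.support, w ∈ s) :
    (G.induce s).Reachable ⟨u, hp u p.start_mem_support⟩ ⟨v, hp v p.end_mem_support⟩ :=
  Reachable.map (induceHomOfLE G hp).toHom <|
    p.connected_induce_support.preconnected ⟨u, p.start_mem_support⟩ ⟨v, p.end_mem_support⟩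

lemma Reachable.induce_of_forall_adj {R : SimpleGraph V} {s : Set V}
    (hR : ∀ ⦃a b⦄, R.Adj a b → ∃ (ha : a ∈ s) (hb : b ∈ s),
      (G.induce s).Reachable ⟨a, ha⟩ ⟨b, hb⟩)
    (h : R.Reachable u v) (hu : u ∈ s) (hv : v ∈ s) :
    (G.induce s).Reachable ⟨u, hu⟩ ⟨v, hv⟩ := by
  obtain ⟨p⟩ := h
  induction p with
  | nil => rfl
  | cons hadj _ ih =>
    obtain ⟨_, hw, hreach⟩ := hR hadj
    exact hreach.trans (ih hw hv)

lemma card_edgeSet_le_card_choose_two [Finite V] (G : SimpleGraph V) :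
    Nat.card G.edgeSet ≤ (Nat.card V).choose 2 := by
  classical
  have := Fintype.ofFinite V
  rw [Nat.card_eq_fintype_card, ← edgeFinset_card, Nat.card_eq_fintype_card]
  exact G.card_edgeFinset_le_card_choose_two

section ColorClass

variable {c : Sym2 V → α} {i : α}

def colorClass (G : SimpleGraph V) (c : Sym2 V → α) (i : α) : SimpleGraph V :=
  G.deleteEdges {e | c e ≠ i}

@[simp] lemma colorClass_adj : (G.colorClass c i).Adj a b ↔ G.Adj a b ∧ c s(a, b) = i := by
  simp [colorClass]

lemma colorClass_le : G.colorClass c i ≤ G := deleteEdges_le _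

lemma edgeSet_colorClass : (G.colorClass c i).edgeSet = G.edgeSet ∩ {e | c e = i} := by
  ext e
  induction e using Sym2.ind
  simp

lemma colorClass_induce (s : Set V) :
    (G.colorClass c i).induce s = (G.induce s).colorClass (c ∘ Sym2.map (↑)) i := by
  ext
  simp

variable [DecidableEq V]

lemma colorClass_update_le_deleteEdges {o : α} (h : o ≠ i) :
    G.colorClass (Function.update c s(a, b) o) i ≤ (G.colorClass c i).deleteEdges {s(a, b)} := by
  intro u v huv
  rw [colorClass_adj, Function.update_apply] at huv
  split_ifs at huv with he
  · exact absurd huv.2 h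
  · simpa [he] using huv

lemma colorClass_update_le_sup_edge :
    G.colorClass (Function.update c s(a, b) i) i ≤ G.colorClass c i ⊔ edge a b := by
  intro u v huv
  rw [colorClass_adj, Function.update_apply] at huv
  split_ifs at huv with he
  · refine .inr ((edge_adj ..).2 ⟨?_, huv.1.ne⟩)
    rcases Sym2.eq_iff.1 he with ⟨rfl, rfl⟩ | ⟨rfl, rfl⟩ <;> simp
  · exact .inl (colorClass_adj.2 huv)

end ColorClass

lemma lt_card_edgeSet_of_connected_colorClass {W : Type*} [Finite W] {H : SimpleGraph W} {r : ℕ}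
    {d : Sym2 W → Option (Fin r)} (hconn : ∀ i, (H.colorClass d (some i)).Connected)
    {e : Sym2 W} (he : e ∈ H.edgeSet) (hde : d e = none) :
    r * (Nat.card W - 1) < Nat.card H.edgeSet := by
  classical
  have := Fintype.ofFinite W
  have hfiber (o : Option (Fin r)) :
      #{e ∈ H.edgeFinset | d e = o} = Nat.card (H.colorClass d o).edgeSet := by
    rw [edgeSet_colorClass, Nat.card_coe_set_eq, ← Set.ncard_coe_finset]
    simp [Set.ofPred_and]
  have hnone : 0 < #{e ∈ H.edgeFinset | d e = none} :=
    card_pos.2 ⟨e, by simpa using ⟨he, hde⟩⟩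
  have hsome (i : Fin r) : Nat.card W - 1 ≤ #{e ∈ H.edgeFinset | d e = some i} := by
    have := (hconn i).card_vert_le_card_edgeSet_add_one
    rw [hfiber]
    omega
  calc r * (Nat.card W - 1) = ∑ _ : Fin r, (Nat.card W - 1) := by simp
    _ ≤ ∑ i : Fin r, #{e ∈ H.edgeFinset | d e = some i} := sum_le_sum fun i _ => hsome i
    _ < ∑ o : Option (Fin r), #{e ∈ H.edgeFinset | d e = o} := by
      rw [Fintype.sum_option]
      omega
    _ = Nat.card H.edgeSet := by
      rw [← card_eq_sum_card_fiberwise (by simp), Nat.card_eq_fintype_card, edgeFinset_card]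

section ForestColoring

variable {r : ℕ} {c : Sym2 V → Option (Fin r)}

/-- `c e = none` marks an edge not covered by any of the `r` forests. -/
def IsForestColoring (G : SimpleGraph V) (c : Sym2 V → Option (Fin r)) : Prop :=
  ∀ i, (G.colorClass c (some i)).IsAcyclic

lemma isForestColoring_none : G.IsForestColoring (fun _ => (none : Option (Fin r))) :=
  fun _ => isAcyclic_bot.anti fun _ _ h => by simp at h

lemma IsForestColoring.update [DecidableEq V] (hc : G.IsForestColoring c) {j : Fin r}
    (hj : ¬(G.colorClass c (some j)).Reachable a b) :
    G.IsForestColoring (Function.update c s(a, b) (some j)) := by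
  intro i
  obtain rfl | hij := eq_or_ne i j
  · exact ((hc i).sup_edge_of_not_reachable hj).anti colorClass_update_le_sup_edge
  · exact (hc i).anti ((colorClass_update_le_deleteEdges (by simpa using hij.symm)).trans
      (deleteEdges_le _))

/-- `(a, b)` is an edge of colour `i` on the colour-`i` path between an earlier pair `(u, v)`:
recolouring `ab` with a colour in which `a` and `b` are disconnected makes `(u, v)` a pair that
colour `i` no longer connects. -/
inductive IsExchangePair (G : SimpleGraph V) (c : Sym2 V → Option (Fin r)) (x y : V) :
    ℕ → V → V → Prop
  | start : G.IsExchangePair c x y 0 x y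
  | step {t : ℕ} {u v a b : V} (i : Fin r) : G.IsExchangePair c x y t u v →
      (G.colorClass c (some i)).Adj a b →
      ¬((G.colorClass c (some i)).deleteEdges {s(a, b)}).Reachable u v →
      G.IsExchangePair c x y (t + 1) a b

lemma IsExchangePair.update [DecidableEq V] {t τ : ℕ} {j : Fin r}
    (hj : ¬(G.colorClass c (some j)).Reachable a b)
    (hconn : ∀ σ ≤ t, ∀ u v, G.IsExchangePair c x y σ u v →
      ∀ i, (G.colorClass c (some i)).Reachable u v)
    (h : G.IsExchangePair c x y τ u v) (hτ : τ ≤ t) :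
    G.IsExchangePair (Function.update c s(a, b) (some j)) x y τ u v := by
  induction h with
  | start => exact .start
  | @step σ u' v' a' b' i hpair hadj hsep ih =>
    have hne : s(a', b') ≠ s(a, b) := by
      intro he
      have := hconn (σ + 1) hτ a' b' (.step i hpair hadj hsep) j
      rcases Sym2.eq_iff.1 he with ⟨rfl, rfl⟩ | ⟨rfl, rfl⟩
      exacts [hj this, hj this.symm]
    refine .step i (ih (by omega)) ?_ fun h => ?_
    · simpa [Function.update_of_ne hne] using hadj
    · obtain rfl | hij := eq_or_ne i j
      · refine not_reachable_sup_edge_of_le (deleteEdges_le _) hj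
          (hconn σ (by omega) u' v' hpair i) hsep (h.mono ?_)
        grw [colorClass_update_le_sup_edge, deleteEdges_sup]
        exact sup_le_sup_left (deleteEdges_le _) _
      · exact hsep (h.mono (deleteEdges_mono ((colorClass_update_le_deleteEdges
          (by simpa using hij.symm)).trans (deleteEdges_le _))))

lemma IsForestColoring.exists_extend_of_isExchangePair [DecidableEq V] (hc : G.IsForestColoring c)
    {t : ℕ} {j : Fin r} (h : G.IsExchangePair c x y t u v)
    (hj : ¬(G.colorClass c (some j)).Reachable u v) :
    ∃ c' : Sym2 V → Option (Fin r), G.IsForestColoring c' ∧ c' s(x, y) ≠ none ∧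
      ∀ e, c' e = none → c e = none := by
  induction t using Nat.strong_induction_on generalizing c u v j with
  | _ t ih =>
  by_cases hbad : ∃ τ < t, ∃ u' v', G.IsExchangePair c x y τ u' v' ∧
      ∃ j', ¬(G.colorClass c (some j')).Reachable u' v'
  · obtain ⟨τ, hτ, u', v', hpair, j', hj'⟩ := hbad
    exact ih τ hτ hc hpair hj'
  push Not at hbad
  -- `t` is now a minimal level of a bad pair, which is what `IsExchangePair.update` needs.
  have update_none {e₀ e : Sym2 V} {j : Fin r} (he : Function.update c e₀ (some j) e = none) :
      c e = none := by
    rw [Function.update_apply] at he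
    split_ifs at he
    exact he
  cases h with
  | start => exact ⟨_, hc.update hj, by simp, fun e => update_none⟩
  | @step τ u' v' _ _ i hpair hadj hsep =>
    have hij : i ≠ j := by
      rintro rfl
      exact hj hadj.reachable
    obtain ⟨c', hc', hxy, hnone⟩ := ih τ (by omega) (hc.update hj)
      (hpair.update hj (fun σ hσ => hbad σ (by omega)) le_rfl) (j := i)
      fun h => hsep (h.mono (colorClass_update_le_deleteEdges (by simpa using hij.symm)))
    exact ⟨c', hc', hxy, fun e he => update_none (hnone e he)⟩

end ForestColoring

section Exchange

variable {r : ℕ} {c : Sym2 V → Option (Fin r)} {t : ℕ}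

def ExchangePairsConnected (G : SimpleGraph V) (c : Sym2 V → Option (Fin r)) (x y : V) : Prop :=
  ∀ t u v, G.IsExchangePair c x y t u v → ∀ i, (G.colorClass c (some i)).Reachable u v

def exchangeGraph (G : SimpleGraph V) (c : Sym2 V → Option (Fin r)) (x y : V) : SimpleGraph V :=
  fromRel fun a b => ∃ t, G.IsExchangePair c x y t a b

lemma IsExchangePair.exchangeGraph_adj (h : G.IsExchangePair c x y t a b) (hab : a ≠ b) :
    (G.exchangeGraph c x y).Adj a b :=
  (fromRel_adj ..).2 ⟨hab, .inl ⟨t, h⟩⟩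

lemma IsExchangePair.mem_edgeSet_exchangeGraph (hc : G.IsForestColoring c)
    (h : G.IsExchangePair c x y t u v) {i : Fin r} {p : (G.colorClass c (some i)).Walk u v}
    (hp : p.IsPath) {e : Sym2 V} (he : e ∈ p.edges) : e ∈ (G.exchangeGraph c x y).edgeSet := by
  induction e using Sym2.ind with
  | _ a b =>
    have hab := p.adj_of_mem_edges he
    exact (h.step i hab ((hc i).not_reachable_deleteEdges_of_mem_edges hp he)).exchangeGraph_adj
      hab.ne

lemma IsExchangePair.reachable_exchangeGraph (hc : G.IsForestColoring c)
    (hconn : G.ExchangePairsConnected c x y)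
    (h : G.IsExchangePair c x y t a b) : (G.exchangeGraph c x y).Reachable a x := by
  classical
  induction h with
  | start => rfl
  | @step τ u' v' a b i hpair _ hsep ih =>
    obtain ⟨p, hp⟩ := (hconn τ u' v' hpair i).exists_isPath
    have ha : a ∈ p.support :=
      p.fst_mem_support_of_mem_edges (p.mem_edges_of_not_reachable_deleteEdges hsep)
    refine Reachable.trans ?_ ih
    exact .symm ⟨(p.takeUntil a ha).transfer _ fun e he =>
      hpair.mem_edgeSet_exchangeGraph hc hp (p.edges_takeUntil_subset_edges ha he)⟩

lemma reachable_exchangeGraph_of_mem_support (hc : G.IsForestColoring c)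
    (hconn : G.ExchangePairsConnected c x y)
    (hw : w ∈ (G.exchangeGraph c x y).support) : (G.exchangeGraph c x y).Reachable w x := by
  obtain ⟨w', hadj⟩ := (mem_support _).1 hw
  obtain ⟨-, ⟨t, h⟩ | ⟨t, h⟩⟩ := (fromRel_adj ..).1 hadj
  · exact h.reachable_exchangeGraph hc hconn
  · exact hadj.reachable.trans (h.reachable_exchangeGraph hc hconn)

lemma reachable_induce_support_of_exchangeGraph_adj (hc : G.IsForestColoring c)
    (hconn : G.ExchangePairsConnected c x y) (i : Fin r)
    (hab : (G.exchangeGraph c x y).Adj a b) :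
    ∃ (ha : a ∈ (G.exchangeGraph c x y).support) (hb : b ∈ (G.exchangeGraph c x y).support),
      ((G.colorClass c (some i)).induce (G.exchangeGraph c x y).support).Reachable
        ⟨a, ha⟩ ⟨b, hb⟩ := by
  wlog h : ∃ t, G.IsExchangePair c x y t a b generalizing a b
  · obtain ⟨-, h' | h'⟩ := (fromRel_adj ..).1 hab
    · exact absurd h' h
    · obtain ⟨hb, ha, hba⟩ := this hab.symm h'
      exact ⟨ha, hb, hba.symm⟩
  obtain ⟨t, h⟩ := h
  obtain ⟨p, hp⟩ := (hconn t a b h i).exists_isPath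
  have hsupp : ∀ w ∈ p.support, w ∈ (G.exchangeGraph c x y).support := by
    intro w hw
    obtain rfl | ⟨e, he, hwe⟩ := Walk.mem_support_iff_exists_mem_edges.1 hw
    · exact hab.right_mem_support
    · obtain ⟨w', rfl⟩ := Sym2.mem_iff_exists.1 hwe
      exact (h.mem_edgeSet_exchangeGraph hc hp he).left_mem_support
  exact ⟨_, _, p.reachable_induce_of_support_subset hsupp⟩

lemma connected_colorClass_induce_support_exchangeGraph (hc : G.IsForestColoring c)
    (hconn : G.ExchangePairsConnected c x y) (hxy : x ≠ y) (i : Fin r) :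
    ((G.colorClass c (some i)).induce (G.exchangeGraph c x y).support).Connected := by
  have hx : x ∈ (G.exchangeGraph c x y).support :=
    (IsExchangePair.start.exchangeGraph_adj hxy).left_mem_support
  have : Nonempty (G.exchangeGraph c x y).support := ⟨⟨x, hx⟩⟩
  refine .mk fun ⟨w, hw⟩ ⟨w', hw'⟩ => Reachable.induce_of_forall_adj
    (fun a b hab => reachable_induce_support_of_exchangeGraph_adj hc hconn i hab)
    ((reachable_exchangeGraph_of_mem_support hc hconn hw).trans
      (reachable_exchangeGraph_of_mem_support hc hconn hw').symm) hw hw'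

lemma IsForestColoring.exists_lt_card_edgeSet_induce [Finite V] (hc : G.IsForestColoring c)
    (hconn : G.ExchangePairsConnected c x y)
    (hxy : G.Adj x y) (hcxy : c s(x, y) = none) :
    ∃ s : Set V, s.Nonempty ∧ r * (Nat.card s - 1) < Nat.card (G.induce s).edgeSet := by
  have hadj := IsExchangePair.start.exchangeGraph_adj (G := G) (c := c) hxy.ne
  refine ⟨_, ⟨x, hadj.left_mem_support⟩, lt_card_edgeSet_of_connected_colorClass
    (d := c ∘ Sym2.map (↑)) (fun i => ?_) (e := s(⟨x, hadj.left_mem_support⟩,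
      ⟨y, hadj.right_mem_support⟩)) hxy hcxy⟩
  rw [← colorClass_induce]
  exact connected_colorClass_induce_support_exchangeGraph hc hconn hxy.ne i

end Exchange

end

section Arboricity

variable {V : Type} {G : SimpleGraph V} {r : ℕ} {c : Sym2 V → Option (Fin r)}

lemma arbAtMost_of_isForestColoring (hc : G.IsForestColoring c)
    (hcov : ∀ e ∈ G.edgeSet, c e ≠ none) : ArbAtMost G r := by
  refine ⟨fun i => G.colorClass c (some i), fun _ => colorClass_le, hc, fun u v huv => ?_,
    fun i j hij u v ⟨hi, hj⟩ => hij ?_⟩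
  · obtain ⟨i, hi⟩ := Option.ne_none_iff_exists'.1 (hcov s(u, v) huv)
    exact ⟨i, colorClass_adj.2 ⟨huv, hi⟩⟩
  · exact Option.some_injective _ ((colorClass_adj.1 hi).2.symm.trans (colorClass_adj.1 hj).2)

theorem arbAtMost_of_forall_card_edgeSet_induce_le [Finite V]
    (h : ∀ s : Set V, s.Nonempty → Nat.card (G.induce s).edgeSet ≤ r * (Nat.card s - 1)) :
    ArbAtMost G r := by
  classical
  have := Fintype.ofFinite V
  let covered (c : Sym2 V → Option (Fin r)) := {e ∈ G.edgeFinset | c e ≠ none}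
  obtain ⟨c, hc, hmax⟩ := ({c | G.IsForestColoring c} : Finset _).exists_max_image
    (fun c => #(covered c)) ⟨_, mem_filter.2 ⟨mem_univ _, isForestColoring_none⟩⟩
  rw [mem_filter] at hc
  refine arbAtMost_of_isForestColoring hc.2 fun e he hce => ?_
  induction e using Sym2.ind with
  | _ x y =>
  by_cases hbad : ∃ t u v, G.IsExchangePair c x y t u v ∧
      ∃ j, ¬(G.colorClass c (some j)).Reachable u v
  · obtain ⟨t, u, v, hpair, j, hj⟩ := hbad
    obtain ⟨c', hc', hxy, hnone⟩ := hc.2.exists_extend_of_isExchangePair hpair hj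
    refine (hmax c' (mem_filter.2 ⟨mem_univ _, hc'⟩)).not_gt (card_lt_card ?_)
    have hsub : covered c ⊆ covered c' := fun e => by
      simpa [covered] using fun he hce => ⟨he, mt (hnone e) hce⟩
    exact (ssubset_iff_of_subset hsub).2 ⟨s(x, y), by simpa [covered] using ⟨he, hxy⟩,
      by simp [covered, hce]⟩
  · push Not at hbad
    obtain ⟨s, hs, hlt⟩ := hc.2.exists_lt_card_edgeSet_induce hbad he hce
    exact (h s hs).not_gt hlt

end Arboricity

end SimpleGraph

namespace Link

variable {m n : ℕ}

@[simp] lemma flip_flip (l : Link m n) : l.flip.flip = l := by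
  cases l <;> rfl

def equivSum (m n : ℕ) : Link m n ≃ Fin m ⊕ Fin m ⊕ Fin n where
  toFun
    | .arcOut c => .inl c
    | .arcIn c => .inr (.inl c)
    | .edge c => .inr (.inr c)
  invFun
    | .inl c => .arcOut c
    | .inr (.inl c) => .arcIn c
    | .inr (.inr c) => .edge c
  left_inv l := by cases l <;> rfl
  right_inv x := by rcases x with c | c | c <;> rfl

instance : Finite (Link m n) := .of_equiv _ (equivSum m n).symm

lemma card_eq : Nat.card (Link m n) = 2 * m + n := by
  rw [Nat.card_congr (equivSum m n), Nat.card_eq_fintype_card]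
  simp only [Fintype.card_sum, Fintype.card_fin]
  ring

end Link

namespace CMGraph

variable {m n : ℕ} {V : Type} {G : SimpleGraph V} {u v : V}

lemma underlying_adj (M : CMGraph m n V) : M.underlying.Adj u v ↔ (M.link u v).isSome := Iff.rfl

section Oriented

variable [LinearOrder V]

open Classical in
/-- `χ e` is the link from the smaller endpoint of `e` to the larger one. -/
noncomputable def ofOriented (G : SimpleGraph V) (χ : G.edgeSet → Link m n) : CMGraph m n V where
  link u v :=
    if h : G.Adj u v then
      some (if u < v then χ ⟨s(u, v), h⟩ else (χ ⟨s(u, v), h⟩).flip)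
    else none
  symm u v := by
    by_cases h : G.Adj u v
    · have he : (⟨s(v, u), h.symm⟩ : G.edgeSet) = ⟨s(u, v), h⟩ := Subtype.ext Sym2.eq_swap
      rw [dif_pos h, dif_pos h.symm, he]
      rcases lt_trichotomy u v with huv | rfl | huv
      · simp [huv, huv.not_gt]
      · exact absurd h (G.loopless.irrefl _)
      · simp [huv, huv.not_gt]
    · rw [dif_neg h, dif_neg fun h' => h h'.symm]
      rfl
  loopless v := dif_neg (G.loopless.irrefl v)

variable {χ : G.edgeSet → Link m n}

lemma ofOriented_underlying : (ofOriented G χ).underlying = G := by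
  ext u v
  by_cases h : G.Adj u v <;> simp [underlying_adj, ofOriented, h]

lemma ofOriented_link_of_lt (h : G.Adj u v) (huv : u < v) :
    (ofOriented G χ).link u v = some (χ ⟨s(u, v), h⟩) := by
  simp [ofOriented, h, huv]

lemma ofOriented_link_of_gt (h : G.Adj u v) (huv : v < u) :
    (ofOriented G χ).link u v = some (χ ⟨s(u, v), h⟩).flip := by
  simp [ofOriented, h, huv.not_gt]

lemma ofOriented_link_injective :
    Function.Injective fun χ : G.edgeSet → Link m n => (ofOriented G χ).link := by
  intro χ χ' hχ
  funext ⟨e, he⟩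
  induction e using Sym2.ind with
  | _ u v =>
  wlog huv : u < v generalizing u v
  · have he' : G.Adj v u := (show G.Adj u v from he).symm
    have := this v u he' ((G.ne_of_adj he).lt_or_gt.resolve_left huv)
    simpa [Sym2.eq_swap] using this
  simpa [ofOriented_link_of_lt he huv] using congrFun (congrFun hχ u) v

end Oriented

open Classical in
noncomputable def piecewise (M : CMGraph m n V) (s : Set V) (M' : CMGraph m n s) :
    CMGraph m n V where
  link u v := if h : u ∈ s ∧ v ∈ s then M'.link ⟨u, h.1⟩ ⟨v, h.2⟩ else M.link u v
  symm u v := by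
    by_cases h : u ∈ s ∧ v ∈ s
    · rw [dif_pos h, dif_pos h.symm, M'.symm]
    · rw [dif_neg h, dif_neg (mt And.symm h), M.symm]
  loopless v := by
    by_cases hv : v ∈ s <;> simp [hv, M'.loopless, M.loopless]

variable {M : CMGraph m n V} {s : Set V} {M' : CMGraph m n s}

lemma piecewise_link_coe (u v : s) : (M.piecewise s M').link u v = M'.link u v :=
  dif_pos ⟨u.2, v.2⟩

lemma piecewise_underlying (hM : M.underlying = G) (hM' : M'.underlying = G.induce s) :
    (M.piecewise s M').underlying = G := by
  ext u v
  rw [underlying_adj]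
  by_cases h : u ∈ s ∧ v ∈ s
  · have hl := piecewise_link_coe (M := M) (M' := M') ⟨u, h.1⟩ ⟨v, h.2⟩
    simp only at hl
    rw [hl, ← underlying_adj, hM']
    rfl
  · simp only [piecewise, dif_neg h]
    rw [← underlying_adj, hM]

end CMGraph

lemma IsCMHom.link_eq {m n : ℕ} {V W : Type} {M : CMGraph m n V} {K : CMGraph m n W} {f : V → W}
    (hf : IsCMHom M K f) {u v : V} (h : M.underlying.Adj u v) :
    K.link (f u) (f v) = M.link u v := by
  obtain ⟨l, hl⟩ := Option.isSome_iff_exists.1 h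
  rw [hl, hf u v l hl]

open CMGraph

/-- Any target on at most `k` vertices embeds in `Fin k`, and completing it there (unlinked pairs
get an arbitrary oriented link) keeps the homomorphism. -/
lemma CMChromAtMost.exists_isCMHom_ofOriented {m n k : ℕ} {V : Type} [Nonempty (Link m n)]
    {M : CMGraph m n V} (h : CMChromAtMost M k) :
    ∃ (T : (⊤ : SimpleGraph (Fin k)).edgeSet → Link m n) (φ : V → Fin k),
      IsCMHom M (ofOriented ⊤ T) φ := by
  classical
  obtain ⟨W, _, K, f, hcard, hf⟩ := h
  obtain ⟨ι⟩ := Function.Embedding.nonempty_of_card_le (hcard.trans (Fintype.card_fin k).ge)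
  rcases isEmpty_or_nonempty W with hW | hW
  · exact ⟨fun _ => Classical.arbitrary _, fun v => isEmptyElim (f v),
      fun u _ _ _ => isEmptyElim (f u)⟩
  have hinv : Function.LeftInverse (Function.invFun ι) ι :=
    Function.leftInverse_invFun ι.injective
  let T : (⊤ : SimpleGraph (Fin k)).edgeSet → Link m n := fun e =>
    (K.link (Function.invFun ι e.1.inf) (Function.invFun ι e.1.sup)).getD (Classical.arbitrary _)
  refine ⟨T, ι ∘ f, fun u v l hl => ?_⟩
  have hK := hf u v l hl
  have hne : ι (f u) ≠ ι (f v) := fun heq => by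
    rw [ι.injective heq, K.loopless] at hK
    cases hK
  have hadj : (⊤ : SimpleGraph (Fin k)).Adj (ι (f u)) (ι (f v)) := hne
  rcases hne.lt_or_gt with hlt | hgt
  · rw [Function.comp_apply, Function.comp_apply, ofOriented_link_of_lt hadj hlt]
    simp [T, hlt.le, hinv (f u), hinv (f v), hK]
  · rw [Function.comp_apply, Function.comp_apply, ofOriented_link_of_gt hadj hgt]
    simp [T, hgt.le, hinv (f u), hinv (f v), K.symm (f u) (f v), hK]

/-- `χ_{(m,n)}(G) ≤ k`. -/
def MixedChromAtMost (m n : ℕ) {V : Type} (G : SimpleGraph V) (k : ℕ) : Prop :=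
  ∀ M : CMGraph m n V, M.underlying = G → CMChromAtMost M k

namespace MixedChromAtMost

variable {m n k : ℕ} {V : Type} {G : SimpleGraph V} [Nonempty (Link m n)]

lemma induce (h : MixedChromAtMost m n G k) (s : Set V) :
    MixedChromAtMost m n (G.induce s) k := by
  let : LinearOrder V := IsWellOrder.linearOrder WellOrderingRel
  intro M' hM'
  obtain ⟨W, _, K, f, hcard, hf⟩ := h _ (piecewise_underlying
    (ofOriented_underlying (χ := fun _ => Classical.arbitrary _)) hM')
  exact ⟨W, _, K, f ∘ (↑), hcard, fun u v l hl => hf u v l (by rwa [piecewise_link_coe])⟩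

/-- A link assignment on the edges of `G` is determined by a homomorphism to a complete target on
`Fin k`, i.e. by a vertex map and one link for each pair of `Fin k`. -/
theorem pow_card_edgeSet_le [Finite V] (h : MixedChromAtMost m n G k) :
    (2 * m + n) ^ Nat.card G.edgeSet ≤ k ^ Nat.card V * (2 * m + n) ^ k.choose 2 := by
  classical
  let : LinearOrder V := IsWellOrder.linearOrder WellOrderingRel
  choose T φ hφ using fun χ : G.edgeSet → Link m n =>
    (h _ (ofOriented_underlying (χ := χ))).exists_isCMHom_ofOriented
  have hinj : Function.Injective fun χ => (φ χ, T χ) := by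
    intro χ χ' heq
    obtain ⟨hφχ, hTχ⟩ := Prod.mk.inj heq
    apply ofOriented_link_injective
    funext u v
    show (ofOriented G χ).link u v = (ofOriented G χ').link u v
    by_cases huv : G.Adj u v
    · rw [← (hφ χ).link_eq (by rwa [ofOriented_underlying]),
        ← (hφ χ').link_eq (by rwa [ofOriented_underlying]), hφχ, hTχ]
    · simp [ofOriented, huv]
  have hcard := Nat.card_le_card_of_injective _ hinj
  have htop : Nat.card (⊤ : SimpleGraph (Fin k)).edgeSet = k.choose 2 := by
    rw [Nat.card_eq_fintype_card, ← SimpleGraph.edgeFinset_card,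
      SimpleGraph.card_edgeFinset_top_eq_card_choose_two, Fintype.card_fin]
  rwa [Nat.card_fun, Nat.card_prod, Nat.card_fun, Nat.card_fun, Link.card_eq, htop, Nat.card_fin]
    at hcard

end MixedChromAtMost

lemma le_mul_logb_add_of_pow_le {p k v E C : ℕ} (hp : 2 ≤ p) (hk : 1 ≤ k)
    (hpow : p ^ E ≤ k ^ v * p ^ C) : (E : ℝ) ≤ v * Real.logb p k + C := by
  have hp' : (1 : ℝ) < p := by exact_mod_cast hp
  have hk' : (0 : ℝ) < k := by exact_mod_cast hk
  have := Real.logb_le_logb_of_le hp' (by positivity) (show (p : ℝ) ^ E ≤ k ^ v * p ^ C by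
    exact_mod_cast hpow)
  rwa [Real.logb_mul (by positivity) (by positivity), Real.logb_pow, Real.logb_pow,
    Real.logb_pow, Real.logb_self_eq_one hp', mul_one, mul_one] at this

/-- For `v ≤ 2r` the bound `E ≤ v choose 2` suffices, for `v > 2r` the counting bound does. -/
lemma le_mul_sub_one_of_pow_le {p k v E r : ℕ} (hp : 2 ≤ p) (hv : 1 ≤ v)
    (hr : Real.logb p k + k / 2 ≤ r) (hE : E ≤ v.choose 2)
    (hpow : p ^ E ≤ k ^ v * p ^ k.choose 2) : E ≤ r * (v - 1) := by
  have hk : 1 ≤ k := by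
    by_contra! hk
    obtain rfl : k = 0 := by omega
    rw [zero_pow (by omega), zero_mul] at hpow
    exact (pow_pos (by omega) E).ne' (Nat.le_zero.1 hpow)
  suffices h : (E : ℝ) ≤ r * ((v : ℝ) - 1) by
    rw [← Nat.cast_le (α := ℝ), Nat.cast_mul, Nat.cast_sub hv, Nat.cast_one]
    exact h
  have hL : 0 ≤ Real.logb p k :=
    Real.logb_nonneg (by exact_mod_cast hp) (by exact_mod_cast hk)
  have hk' : (1 : ℝ) ≤ k := by exact_mod_cast hk
  have hv' : (1 : ℝ) ≤ v := by exact_mod_cast hv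
  rcases le_or_gt (v : ℝ) (2 * r) with hsmall | hlarge
  · have hE' : (E : ℝ) ≤ v * (v - 1) / 2 := by
      rw [← Nat.cast_choose_two]
      exact_mod_cast hE
    nlinarith
  · have hlog := le_mul_logb_add_of_pow_le hp hk hpow
    rw [Nat.cast_choose_two] at hlog
    nlinarith [mul_nonneg (sub_nonneg.2 hr) (sub_nonneg.2 hv'),
      mul_nonneg (sub_nonneg.2 hk') hL, mul_nonneg (sub_nonneg.2 hk') (sub_nonneg.2 hlarge.le)]

/-- If every `(m,n)`-colored mixed graph with underlying graph `G`
admits a homomorphism to some `(m,n)`-colored mixed graph on at most `k` vertices,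
then `arb(G) ≤ ⌈log_p k + k/2⌉` where `p = 2m+n ≥ 2`. -/
theorem arboricity_le_of_mixed_chromatic (m n k : ℕ) (hp : 2 ≤ 2 * m + n)
    (V : Type) [Fintype V] (G : SimpleGraph V)
    (h : ∀ M : CMGraph m n V, M.underlying = G → CMChromAtMost M k) :
    ArbAtMost G ⌈Real.logb (2 * m + n : ℝ) (k : ℝ) + (k : ℝ) / 2⌉₊ := by
  have : Nonempty (Link m n) := Nat.card_pos_iff.1 (by rw [Link.card_eq]; omega) |>.1
  refine SimpleGraph.arbAtMost_of_forall_card_edgeSet_induce_le fun s hs => ?_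
  have := hs.to_subtype
  exact le_mul_sub_one_of_pow_le hp Nat.card_pos (by push_cast; exact Nat.le_ceil _)
    (SimpleGraph.card_edgeSet_le_card_choose_two _)
    (MixedChromAtMost.induce h s).pow_card_edgeSet_le
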